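/- Let G be a connected 3-regular graph and let f, g: E(G) → {0,1} have different parity. Then the uncolored CFI graphs Y_f(G) and Y_g(G) are not isomorphic. -/

import Mathlib

/-!
An isomorphism `φ : Y_f(G) ≃ Y_g(G)` must send middle vertices to middle vertices: they are
exactly the vertices any two of whose neighbours are joined by a path of length four avoiding
them. Hence `φ` maps gadgets onto gadgets, inducing an automorphism `σ` of `G`, and it sends
the pair of edge vertices `(v,u)_0, (v,u)_1` to `(σv,σu)_0, (σv,σu)_1`, adding a twist bit
`t(v,u)`. The image of the middle vertex `v_∅` shows that the twists at each vertex have even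
sum, while the edges between gadgets give `f(e) + g(σ e) = t(v,u) + t(u,v)`. Summing over all
edges, `∑ f + ∑ g = ∑ᵥ ∑_{u ~ v} t(v,u) = 0` in `ZMod 2`.
-/

open SimpleGraph

variable {V : Type*} [Fintype V] [DecidableEq V]

/-- Vertices of the CFI graph `X_f(G)`: a middle vertex `(v, T)` for each vertex `v`
of `G` and each even subset `T` of the neighbors of `v` (encoding the even-parity
bit-vector `b_u = [u ∈ T]`), and an edge vertex `(v, u, b)` for each directed edge
`(v,u)` of `G` and `b ∈ {0,1}`. -/
def CFIVert (G : SimpleGraph V) [DecidableRel G.Adj] : Type _ :=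
  {x : (V × Finset V) ⊕ (V × V × Bool) //
    Sum.elim (fun p => p.2 ⊆ G.neighborFinset p.1 ∧ Even p.2.card)
      (fun p => G.Adj p.1 p.2.1) x}

/-- The CFI graph `X_f(G)` (as an uncolored graph this is `Y_f(G)`): middle vertex
`v_T` is adjacent to edge vertex `(v,u)_b` iff `b = [u ∈ T]`, and edge vertices
`(v,u)_b` and `(u,v)_{b ⊕ f((u,v))}` are joined for every edge `(u,v)` of `G`. -/
def CFIGraph (G : SimpleGraph V) [DecidableRel G.Adj] (f : Sym2 V → Bool) :
    SimpleGraph (CFIVert G) :=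
  SimpleGraph.fromRel fun a b =>
    match a.1, b.1 with
    | .inl (v, T), .inr (w, u, c) => v = w ∧ c = decide (u ∈ T)
    | .inr (v, u, c), .inr (v', u', c') => v = u' ∧ u = v' ∧ c' = (c ^^ f s(v, u))
    | _, _ => False

/-- The coloring of `X_f(G)`: each middle vertex of the gadget at `v` is colored by
`v`, and the pair of edge vertices `(v,u)_0, (v,u)_1` is colored by `(v,u)`. -/
def CFIColor (G : SimpleGraph V) [DecidableRel G.Adj] : CFIVert G → V ⊕ (V × V) :=
  fun a => Sum.elim (fun p => Sum.inl p.1) (fun p => Sum.inr (p.1, p.2.1)) a.1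

/-- `f : E(G) → {0,1}` has even parity if the number of edges with `f(e) = 1` is even. -/
def EvenParity (G : SimpleGraph V) [DecidableRel G.Adj] (f : Sym2 V → Bool) : Prop :=
  Even ((G.edgeFinset.filter fun e => f e = true).card)

open Finset
open scoped symmDiff

theorem Finset.even_card_symmDiff {α : Type*} [DecidableEq α] {s t : Finset α}
    (hs : Even #s) (ht : Even #t) : Even #(s ∆ t) := by
  have hsub : s ∩ t ⊆ s ∪ t := inter_subset_left.trans subset_union_left
  have hcard : #(s ∆ t) + 2 * #(s ∩ t) = #s + #t := by
    rw [symmDiff_eq_sup_sdiff_inf, sup_eq_union, inf_eq_inter, card_sdiff_of_subset hsub,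
      ← card_union_add_card_inter s t]
    have := card_le_card hsub
    omega
  have : Even (#(s ∆ t) + 2 * #(s ∩ t)) := hcard ▸ hs.add ht
  simpa [Nat.even_add] using this

theorem Finset.even_card_filter_iff_sum_toNat_eq_zero {α : Type*} (s : Finset α)
    (p : α → Bool) : Even #{a ∈ s | p a} ↔ ∑ a ∈ s, ((p a).toNat : ZMod 2) = 0 := by
  rw [← ZMod.natCast_eq_zero_iff_even, card_filter, Nat.cast_sum]
  congr! 2 with a
  cases p a <;> rfl

theorem Bool.natCast_toNat_xor (a b : Bool) :
    ((a ^^ b).toNat : ZMod 2) = a.toNat + b.toNat := by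
  cases a <;> cases b <;> rfl

namespace SimpleGraph

variable {W W' : Type*}

def HasLinkedNeighbors (H : SimpleGraph W) (x : W) : Prop :=
  ∀ y z, H.Adj x y → H.Adj x z → y ≠ z →
    ∃ a b c, a ≠ x ∧ b ≠ x ∧ c ≠ x ∧ H.Adj y a ∧ H.Adj a b ∧ H.Adj b c ∧ H.Adj c z

theorem HasLinkedNeighbors.map {H : SimpleGraph W} {H' : SimpleGraph W'} (e : H ≃g H') {x : W}
    (hx : H.HasLinkedNeighbors x) : H'.HasLinkedNeighbors (e x) := by
  intro y z hy hz hyz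
  obtain ⟨y, rfl⟩ := e.surjective y
  obtain ⟨z, rfl⟩ := e.surjective z
  obtain ⟨a, b, c, ha, hb, hc, h₁, h₂, h₃, h₄⟩ :=
    hx y z (e.map_adj_iff.1 hy) (e.map_adj_iff.1 hz) (ne_of_apply_ne e hyz)
  exact ⟨e a, e b, e c, e.injective.ne ha, e.injective.ne hb, e.injective.ne hc,
    e.map_adj_iff.2 h₁, e.map_adj_iff.2 h₂, e.map_adj_iff.2 h₃, e.map_adj_iff.2 h₄⟩

theorem Iso.hasLinkedNeighbors_iff {H : SimpleGraph W} {H' : SimpleGraph W'} (e : H ≃g H')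
    {x : W} : H'.HasLinkedNeighbors (e x) ↔ H.HasLinkedNeighbors x :=
  ⟨fun h => by simpa using h.map e.symm, HasLinkedNeighbors.map e⟩

variable [Fintype W] {G : SimpleGraph W} [DecidableRel G.Adj] {v : W}

theorem exists_adj_ne (hv : 2 ≤ G.degree v) (u : W) : ∃ w, G.Adj v w ∧ w ≠ u := by
  obtain ⟨w, hw, hwu⟩ := exists_mem_ne (s := G.neighborFinset v)
    (by rw [card_neighborFinset_eq_degree]; omega) u
  exact ⟨w, (G.mem_neighborFinset v w).1 hw, hwu⟩

theorem exists_adj_ne_ne [DecidableEq W] (hv : 3 ≤ G.degree v) (a b : W) :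
    ∃ c, G.Adj v c ∧ c ≠ a ∧ c ≠ b := by
  have : #{a, b} < #(G.neighborFinset v) :=
    card_le_two.trans_lt (by rwa [card_neighborFinset_eq_degree])
  obtain ⟨c, hc, hcab⟩ := exists_mem_notMem_of_card_lt_card this
  simp only [mem_insert, mem_singleton, not_or] at hcab
  exact ⟨c, (G.mem_neighborFinset v c).1 hc, hcab⟩

theorem sum_edgeFinset_eq_sum_sum_neighborFinset [DecidableEq W] {M : Type*} [AddCommMonoid M]
    (w : W → W → M) (F : Sym2 W → M) (hF : ∀ v u, G.Adj v u → F s(v, u) = w v u + w u v) :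
    ∑ e ∈ G.edgeFinset, F e = ∑ v, ∑ u ∈ G.neighborFinset v, w v u := by
  have hpairs : ∑ v, ∑ u ∈ G.neighborFinset v, w v u =
      ∑ p ∈ univ.filter (fun p : W × W => G.Adj p.1 p.2), w p.1 p.2 := by
    rw [sum_filter, ← univ_product_univ, sum_product]
    simp only [neighborFinset_eq_filter, sum_filter]
  rw [hpairs, ← sum_fiberwise_of_maps_to (g := fun p : W × W => s(p.1, p.2))
    (t := G.edgeFinset) (by simp)]
  refine sum_congr rfl fun e he => ?_
  induction e using Sym2.ind with
  | _ a b =>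
    have hab : G.Adj a b := by simpa using he
    have hfiber : {p ∈ univ.filter (fun p : W × W => G.Adj p.1 p.2) | s(p.1, p.2) = s(a, b)} =
        {(a, b), (b, a)} := by
      ext ⟨x, y⟩
      simp only [mem_filter, mem_univ, true_and, mem_insert, mem_singleton, Sym2.eq_iff,
        Prod.mk.injEq]
      constructor
      · exact fun h => h.2
      · rintro (⟨rfl, rfl⟩ | ⟨rfl, rfl⟩)
        exacts [⟨hab, .inl ⟨rfl, rfl⟩⟩, ⟨hab.symm, .inr ⟨rfl, rfl⟩⟩]
    rw [hfiber, sum_pair (by simp [hab.ne]), hF a b hab]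

theorem Iso.sum_edgeFinset_map [Fintype W'] {G' : SimpleGraph W'} [DecidableRel G'.Adj]
    {M : Type*} [AddCommMonoid M] (σ : G ≃g G') (F : Sym2 W' → M) :
    ∑ e ∈ G.edgeFinset, F (e.map σ) = ∑ e ∈ G'.edgeFinset, F e :=
  sum_nbij' (Sym2.map σ) (Sym2.map σ.symm) (by simp [σ.map_mem_edgeSet_iff])
    (by simp [σ.symm.map_mem_edgeSet_iff]) (by simp [Sym2.map_map]) (by simp [Sym2.map_map])
    (fun _ _ => rfl)

end SimpleGraph

namespace CFIVert

omit [DecidableEq V]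

variable {G : SimpleGraph V} [DecidableRel G.Adj]

-- `mid v T` is the middle vertex `v_T`, `arc v u c` the edge vertex `(v,u)_c`, and
-- `gadget x` the vertex of `G` whose gadget contains `x`.

def mid (v : V) (T : Finset V) (hT : T ⊆ G.neighborFinset v ∧ Even #T) : CFIVert G :=
  ⟨.inl (v, T), hT⟩

def arc (v u : V) (c : Bool) (h : G.Adj v u) : CFIVert G :=
  ⟨.inr (v, u, c), h⟩

def gadget (x : CFIVert G) : V :=
  Sum.elim Prod.fst Prod.fst x.1

def bit (x : CFIVert G) : Bool :=
  Sum.elim (fun _ => false) (fun p => p.2.2) x.1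

def IsMid (x : CFIVert G) : Prop :=
  ∃ v T hT, x = mid v T hT

theorem empty_subset_and_even (v : V) :
    (∅ : Finset V) ⊆ G.neighborFinset v ∧ Even #(∅ : Finset V) :=
  ⟨empty_subset _, by simp⟩

@[simp] theorem gadget_mid {v T hT} : (mid v T hT : CFIVert G).gadget = v := rfl

@[simp] theorem gadget_arc {v u c h} : (arc v u c h : CFIVert G).gadget = v := rfl

@[simp] theorem bit_arc {v u c h} : (arc v u c h : CFIVert G).bit = c := rfl

theorem isMid_mid {v T hT} : (mid v T hT : CFIVert G).IsMid := ⟨v, T, hT, rfl⟩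

@[simp] theorem mid_inj {v v' T T' hT hT'} :
    (mid v T hT : CFIVert G) = mid v' T' hT' ↔ v = v' ∧ T = T' :=
  ⟨fun he => by simpa [mid] using congrArg Subtype.val he, by rintro ⟨rfl, rfl⟩; rfl⟩

@[simp] theorem arc_inj {v v' u u' c c' h h'} :
    (arc v u c h : CFIVert G) = arc v' u' c' h' ↔ v = v' ∧ u = u' ∧ c = c' :=
  ⟨fun he => by simpa [arc] using congrArg Subtype.val he, by rintro ⟨rfl, rfl, rfl⟩; rfl⟩

theorem mid_ne_arc {v w u T c hT h} : (mid v T hT : CFIVert G) ≠ arc w u c h :=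
  fun he => Sum.inl_ne_inr (congrArg Subtype.val he)

theorem not_isMid_arc {v u c h} : ¬(arc v u c h : CFIVert G).IsMid :=
  fun ⟨_, _, _, he⟩ => mid_ne_arc he.symm

theorem isMid_or_exists_eq_arc (x : CFIVert G) : x.IsMid ∨ ∃ v u c h, x = arc v u c h := by
  obtain ⟨⟨v, T⟩ | ⟨v, u, c⟩, hx⟩ := x
  exacts [.inl ⟨v, T, hx, rfl⟩, .inr ⟨v, u, c, hx, rfl⟩]

end CFIVert

namespace CFIGraph

open CFIVert

variable {G : SimpleGraph V} [DecidableRel G.Adj] {f g : Sym2 V → Bool}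

theorem not_adj_of_isMid {x y : CFIVert G} (hx : x.IsMid) (hy : y.IsMid) :
    ¬(CFIGraph G f).Adj x y := by
  obtain ⟨v, T, hT, rfl⟩ := hx
  obtain ⟨w, S, hS, rfl⟩ := hy
  rw [CFIGraph, fromRel_adj]
  simp [mid]

theorem adj_mid_arc {v w u : V} {T : Finset V} {c : Bool} {hT h} :
    (CFIGraph G f).Adj (mid v T hT) (arc w u c h) ↔ v = w ∧ c = decide (u ∈ T) := by
  rw [CFIGraph, fromRel_adj]
  simp only [ne_eq, mid_ne_arc, not_false_eq_true, true_and]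
  simp [mid, arc]

theorem adj_arc_mid {v w u : V} {T : Finset V} {c : Bool} {hT h} :
    (CFIGraph G f).Adj (arc w u c h) (mid v T hT) ↔ v = w ∧ c = decide (u ∈ T) := by
  rw [adj_comm, adj_mid_arc]

theorem adj_arc_arc {v u v' u' : V} {c c' : Bool} {h h'} :
    (CFIGraph G f).Adj (arc v u c h) (arc v' u' c' h') ↔
      v = u' ∧ u = v' ∧ c' = (c ^^ f s(v, u)) := by
  rw [CFIGraph, fromRel_adj, ne_eq, arc_inj]
  simp only [arc]
  constructor
  · rintro ⟨-, ⟨rfl, rfl, rfl⟩ | ⟨rfl, rfl, rfl⟩⟩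
    · exact ⟨rfl, rfl, rfl⟩
    · rw [Sym2.eq_swap]
      simp
  · rintro ⟨rfl, rfl, rfl⟩
    exact ⟨fun he => h.ne he.1, .inl ⟨rfl, rfl, rfl⟩⟩

theorem adj_arc_partner {v u : V} {c : Bool} {h : G.Adj v u} :
    (CFIGraph G f).Adj (arc v u c h) (arc u v (c ^^ f s(v, u)) h.symm) :=
  adj_arc_arc.2 ⟨rfl, rfl, rfl⟩

theorem gadget_eq_of_adj {x y : CFIVert G} (hxy : (CFIGraph G f).Adj x y) (hx : x.IsMid) :
    y.gadget = x.gadget := by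
  obtain ⟨v, T, hT, rfl⟩ := hx
  obtain hy | ⟨w, u, c, h, rfl⟩ := y.isMid_or_exists_eq_arc
  · exact absurd hxy (not_adj_of_isMid isMid_mid hy)
  · exact (adj_mid_arc.1 hxy).1.symm

theorem exists_eq_arc_of_adj_mid {v : V} {T : Finset V} {hT} {y : CFIVert G}
    (hy : (CFIGraph G f).Adj (mid v T hT) y) : ∃ u h, y = arc v u (decide (u ∈ T)) h := by
  obtain hy' | ⟨w, u, c, h, rfl⟩ := y.isMid_or_exists_eq_arc
  · exact absurd hy (not_adj_of_isMid isMid_mid hy')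
  · obtain ⟨rfl, rfl⟩ := adj_mid_arc.1 hy
    exact ⟨u, h, rfl⟩

theorem exists_adj_mid {v u : V} (hv : 2 ≤ G.degree v) (h : G.Adj v u) (c : Bool) :
    ∃ T hT, (CFIGraph G f).Adj (mid v T hT) (arc v u c h) := by
  cases c with
  | false => exact ⟨∅, empty_subset_and_even v, adj_mid_arc.2 ⟨rfl, by simp⟩⟩
  | true =>
    obtain ⟨w, hw, hwu⟩ := exists_adj_ne hv u
    refine ⟨{u, w}, ⟨?_, ?_⟩, adj_mid_arc.2 ⟨rfl, by simp⟩⟩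
    · simp [insert_subset_iff, h, hw]
    · simp [card_pair hwu.symm]

theorem symmDiff_pair_subset_and_even {v a b : V} {T : Finset V}
    (hT : T ⊆ G.neighborFinset v ∧ Even #T) (ha : G.Adj v a) (hb : G.Adj v b) (hab : a ≠ b) :
    T ∆ {a, b} ⊆ G.neighborFinset v ∧ Even #(T ∆ {a, b}) :=
  ⟨symmDiff_subset_union.trans (union_subset hT.1 (by simp [insert_subset_iff, ha, hb])),
    even_card_symmDiff hT.2 (by simp [card_pair hab])⟩

theorem hasLinkedNeighbors_mid {v : V} {T : Finset V} {hT} (hv : 3 ≤ G.degree v) :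
    (CFIGraph G f).HasLinkedNeighbors (mid v T hT) := by
  intro y z hy hz hyz
  obtain ⟨a, ha, rfl⟩ := exists_eq_arc_of_adj_mid hy
  obtain ⟨b, hb, rfl⟩ := exists_eq_arc_of_adj_mid hz
  have hab : a ≠ b := by rintro rfl; exact hyz rfl
  obtain ⟨c, hc, hca, hcb⟩ := exists_adj_ne_ne hv a b
  -- flipping the bits at `{b, c}`, then at `{a, c}`, gives a detour through the arc `(v, c)`
  refine ⟨mid v (T ∆ {b, c}) (symmDiff_pair_subset_and_even hT hb hc hcb.symm),
    arc v c (!decide (c ∈ T)) hc,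
    mid v (T ∆ {a, c}) (symmDiff_pair_subset_and_even hT ha hc hca.symm),
    ?_, fun he => mid_ne_arc he.symm, ?_, adj_arc_mid.2 ⟨rfl, ?_⟩, adj_mid_arc.2 ⟨rfl, ?_⟩,
    adj_arc_mid.2 ⟨rfl, ?_⟩, adj_mid_arc.2 ⟨rfl, ?_⟩⟩
  all_goals simp [symmDiff_eq_left, mem_symmDiff, hab, hab.symm, hca, hcb, hca.symm, hcb.symm]

theorem not_hasLinkedNeighbors_arc {v u : V} {c : Bool} {h : G.Adj v u} (hv : 2 ≤ G.degree v) :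
    ¬(CFIGraph G f).HasLinkedNeighbors (arc v u c h) := by
  intro hlinked
  obtain ⟨T, hT, hm⟩ := exists_adj_mid (f := f) hv h c
  obtain ⟨a, b, d, ha, -, hd, h₁, h₂, h₃, h₄⟩ := hlinked _ _ hm.symm adj_arc_partner mid_ne_arc
  -- the only arc vertex adjacent to the partner of `arc v u c` is `arc v u c` itself
  have hd_mid : d.IsMid := by
    obtain hd' | ⟨w, q, γ, hwq, rfl⟩ := d.isMid_or_exists_eq_arc
    · exact hd'
    obtain ⟨rfl, rfl, hγ⟩ := adj_arc_arc.1 h₄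
    simp_all
  obtain ⟨r, hr, rfl⟩ := exists_eq_arc_of_adj_mid h₁
  obtain hb | ⟨w, q, γ, hwq, rfl⟩ := b.isMid_or_exists_eq_arc
  · exact not_adj_of_isMid hb hd_mid h₃
  have hw : w = u := by
    simpa using (gadget_eq_of_adj h₃.symm hd_mid).trans (gadget_eq_of_adj h₄ hd_mid).symm
  obtain ⟨rfl, rfl, -⟩ := adj_arc_arc.1 h₂
  exact ha (by simp [hw, (adj_mid_arc.1 hm).2])

theorem hasLinkedNeighbors_iff_isMid (hG : ∀ v, 3 ≤ G.degree v) {x : CFIVert G} :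
    (CFIGraph G f).HasLinkedNeighbors x ↔ x.IsMid := by
  obtain ⟨v, T, hT, rfl⟩ | ⟨v, u, c, h, rfl⟩ := x.isMid_or_exists_eq_arc
  · exact iff_of_true (hasLinkedNeighbors_mid (hG v)) isMid_mid
  · exact iff_of_false (not_hasLinkedNeighbors_arc (by linarith [hG v])) not_isMid_arc

theorem isMid_map_iff (hG : ∀ v, 3 ≤ G.degree v) (φ : CFIGraph G f ≃g CFIGraph G g)
    {x : CFIVert G} : (φ x).IsMid ↔ x.IsMid := by
  rw [← hasLinkedNeighbors_iff_isMid hG, ← hasLinkedNeighbors_iff_isMid hG,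
    φ.hasLinkedNeighbors_iff]

theorem gadget_map_eq_of_adj_mid (hG : ∀ v, 3 ≤ G.degree v) (φ : CFIGraph G f ≃g CFIGraph G g)
    {v : V} {T : Finset V} {hT} {y : CFIVert G} (hy : (CFIGraph G f).Adj (mid v T hT) y) :
    (φ y).gadget = (φ (mid v T hT)).gadget :=
  gadget_eq_of_adj (φ.map_adj_iff.2 hy) ((isMid_map_iff hG φ).2 isMid_mid)

def gadgetMap (φ : CFIGraph G f ≃g CFIGraph G g) (v : V) : V :=
  (φ (mid v ∅ (empty_subset_and_even v))).gadget

def twist (φ : CFIGraph G f ≃g CFIGraph G g) (v u : V) : Bool :=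
  if h : G.Adj v u then (φ (arc v u false h)).bit else false

section Cubic

variable (hreg : ∀ v, G.degree v = 3) (φ : CFIGraph G f ≃g CFIGraph G g)
include hreg

theorem gadget_map_mid (v : V) (T : Finset V) (hT) :
    (φ (mid v T hT)).gadget = gadgetMap φ v := by
  have hG : ∀ v, 3 ≤ G.degree v := fun v => (hreg v).ge
  -- `#T` is even, so `T` is not all of the three neighbours
  obtain ⟨u, hu, huT⟩ : ∃ u ∈ G.neighborFinset v, u ∉ T := by
    apply exists_mem_notMem_of_card_lt_card
    have hle := card_le_card hT.1
    have hne : #T ≠ 3 := fun h3 => (by decide : ¬Even 3) (h3 ▸ hT.2)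
    rw [card_neighborFinset_eq_degree, hreg] at hle ⊢
    omega
  have hu' : G.Adj v u := (mem_neighborFinset _ _ _).1 hu
  have h₀ : (CFIGraph G f).Adj (mid v ∅ (empty_subset_and_even v)) (arc v u false hu') :=
    adj_mid_arc.2 ⟨rfl, rfl⟩
  have hT : (CFIGraph G f).Adj (mid v T hT) (arc v u false hu') :=
    adj_mid_arc.2 ⟨rfl, by simp [huT]⟩
  rw [gadgetMap, ← gadget_map_eq_of_adj_mid hG φ h₀, gadget_map_eq_of_adj_mid hG φ hT]

theorem gadget_map (x : CFIVert G) : (φ x).gadget = gadgetMap φ x.gadget := by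
  obtain ⟨v, T, hT, rfl⟩ | ⟨v, u, c, h, rfl⟩ := x.isMid_or_exists_eq_arc
  · exact gadget_map_mid hreg φ v T hT
  · obtain ⟨T, hT, hm⟩ := exists_adj_mid (f := f) (by rw [hreg]; norm_num) h c
    rw [gadget_arc, gadget_map_eq_of_adj_mid (fun v => (hreg v).ge) φ hm,
      gadget_map_mid hreg φ]

theorem exists_map_mid (v : V) (T : Finset V) (hT) :
    ∃ S hS, φ (mid v T hT) = mid (gadgetMap φ v) S hS := by
  obtain ⟨w, S, hS, he⟩ := (isMid_map_iff (fun v => (hreg v).ge) φ).2 (isMid_mid (hT := hT))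
  obtain rfl : w = gadgetMap φ v := by simpa [he] using gadget_map hreg φ (mid v T hT)
  exact ⟨S, hS, he⟩

theorem exists_map_arc_eq_arc_gadgetMap {v u : V} (h : G.Adj v u) (c : Bool) :
    ∃ q c' h', φ (arc v u c h) = arc (gadgetMap φ v) q c' h' := by
  obtain hm | ⟨w, q, c', h', he⟩ := (φ (arc v u c h)).isMid_or_exists_eq_arc
  · exact absurd ((isMid_map_iff (fun v => (hreg v).ge) φ).1 hm) not_isMid_arc
  · obtain rfl : w = gadgetMap φ v := by simpa [he] using gadget_map hreg φ (arc v u c h)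
    exact ⟨q, c', h', he⟩

theorem exists_map_arc {v u : V} (h : G.Adj v u) (c : Bool) :
    ∃ c' h', φ (arc v u c h) = arc (gadgetMap φ v) (gadgetMap φ u) c' h' := by
  obtain ⟨q, c', h', he⟩ := exists_map_arc_eq_arc_gadgetMap hreg φ h c
  obtain ⟨q₂, c₂, h₂, he₂⟩ := exists_map_arc_eq_arc_gadgetMap hreg φ h.symm (c ^^ f s(v, u))
  have hadj := φ.map_adj_iff.2 (adj_arc_partner (c := c) (h := h))
  rw [he, he₂, adj_arc_arc] at hadj
  obtain ⟨-, rfl, -⟩ := hadj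
  exact ⟨c', h', he⟩

theorem gadgetMap_symm_gadgetMap (v : V) : gadgetMap φ.symm (gadgetMap φ v) = v := by
  have h := gadget_map hreg φ.symm (φ (mid v ∅ (empty_subset_and_even v)))
  rw [RelIso.symm_apply_apply] at h
  exact h.symm

def gadgetIso : G ≃g G where
  toFun := gadgetMap φ
  invFun := gadgetMap φ.symm
  left_inv := gadgetMap_symm_gadgetMap hreg φ
  right_inv v := gadgetMap_symm_gadgetMap hreg φ.symm v
  map_rel_iff' {v u} := by
    change G.Adj (gadgetMap φ v) (gadgetMap φ u) ↔ G.Adj v u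
    refine ⟨fun h => ?_, fun h => ?_⟩
    · obtain ⟨-, h', -⟩ := exists_map_arc hreg φ.symm h false
      rwa [gadgetMap_symm_gadgetMap hreg φ, gadgetMap_symm_gadgetMap hreg φ] at h'
    · obtain ⟨-, h', -⟩ := exists_map_arc hreg φ h false
      exact h'

theorem gadgetIso_apply (v : V) : gadgetIso hreg φ v = gadgetMap φ v := rfl

theorem map_arc {v u : V} (h : G.Adj v u) (c : Bool) :
    ∃ h', φ (arc v u c h) = arc (gadgetMap φ v) (gadgetMap φ u) (c ^^ twist φ v u) h' := by
  obtain ⟨c₀, h₀, he₀⟩ := exists_map_arc hreg φ h false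
  have ht : twist φ v u = c₀ := by rw [twist, dif_pos h, he₀, bit_arc]
  cases c
  · exact ⟨h₀, by rw [he₀, ht, Bool.false_xor]⟩
  obtain ⟨c₁, h₁, he₁⟩ := exists_map_arc hreg φ h true
  have hne : φ (arc v u true h) ≠ φ (arc v u false h) := φ.injective.ne (by simp)
  rw [he₀, he₁, Ne, arc_inj] at hne
  exact ⟨h₁, by rw [he₁, ht]; cases c₀ <;> cases c₁ <;> simp_all⟩

theorem even_card_twist (v : V) : Even #{u ∈ G.neighborFinset v | twist φ v u} := by
  obtain ⟨S, hS, he⟩ := exists_map_mid hreg φ v ∅ (empty_subset_and_even v)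
  have htwist : ∀ u, G.Adj v u → twist φ v u = decide (gadgetMap φ u ∈ S) := by
    intro u hu
    obtain ⟨h', he'⟩ := map_arc hreg φ hu false
    have hadj := φ.map_adj_iff.2 (adj_mid_arc.2 ⟨rfl, rfl⟩ :
      (CFIGraph G f).Adj (mid v ∅ (empty_subset_and_even v)) (arc v u false hu))
    rw [he, he', adj_mid_arc] at hadj
    simpa using hadj.2
  have hcard : #{u ∈ G.neighborFinset v | twist φ v u} = #S := by
    set σ := gadgetIso hreg φ
    refine card_nbij' σ σ.symm ?_ ?_ (fun u _ => σ.symm_apply_apply u)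
      (fun s _ => σ.apply_symm_apply s)
    · intro u hu
      simp only [coe_filter, mem_neighborFinset, Set.mem_ofPred_eq] at hu
      have := hu.2
      rw [htwist u hu.1, decide_eq_true_iff] at this
      exact this
    · intro s hs
      have hadj : G.Adj (σ v) s := (mem_neighborFinset _ _ _).1 (hS.1 hs)
      rw [← σ.symm.map_adj_iff, RelIso.symm_apply_apply] at hadj
      simp only [coe_filter, mem_neighborFinset, Set.mem_ofPred_eq]
      refine ⟨hadj, ?_⟩
      rw [htwist _ hadj, ← gadgetIso_apply hreg, RelIso.apply_symm_apply]
      simpa using hs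
  exact hcard ▸ hS.2

theorem twist_xor_twist {v u : V} (h : G.Adj v u) :
    (twist φ v u ^^ twist φ u v) = (f s(v, u) ^^ g s(gadgetMap φ v, gadgetMap φ u)) := by
  obtain ⟨h₁, he₁⟩ := map_arc hreg φ h false
  obtain ⟨h₂, he₂⟩ := map_arc hreg φ h.symm (false ^^ f s(v, u))
  have hadj := φ.map_adj_iff.2 (adj_arc_partner (c := false) (h := h))
  rw [he₁, he₂, adj_arc_arc] at hadj
  obtain ⟨-, -, hbits⟩ := hadj
  revert hbits
  cases twist φ v u <;> cases twist φ u v <;> cases f s(v, u) <;>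
    cases g s(gadgetMap φ v, gadgetMap φ u) <;> decide

end Cubic

end CFIGraph

open CFIGraph

theorem cfi_noniso_of_diff_parity_general {V : Type*} [Fintype V] [DecidableEq V]
    (G : SimpleGraph V) [DecidableRel G.Adj]
    (hreg : ∀ v, G.degree v = 3)
    (f g : Sym2 V → Bool) (hpar : ¬ (EvenParity G f ↔ EvenParity G g)) :
    IsEmpty (CFIGraph G f ≃g CFIGraph G g) := by
  refine ⟨fun φ => hpar ?_⟩
  set σ := gadgetIso hreg φ
  have hsum : ∑ e ∈ G.edgeFinset, (((f e).toNat : ZMod 2) + (g (e.map σ)).toNat) = 0 := by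
    rw [sum_edgeFinset_eq_sum_sum_neighborFinset (fun v u => ((twist φ v u).toNat : ZMod 2))]
    · exact sum_eq_zero fun v _ =>
        (even_card_filter_iff_sum_toNat_eq_zero _ _).1 (even_card_twist hreg φ v)
    · intro v u h
      simp only [Sym2.map_mk, σ, gadgetIso_apply, ← Bool.natCast_toNat_xor,
        twist_xor_twist hreg φ h]
  rw [sum_add_distrib, σ.sum_edgeFinset_map fun e => ((g e).toNat : ZMod 2)] at hsum
  rw [EvenParity, EvenParity, even_card_filter_iff_sum_toNat_eq_zero,
    even_card_filter_iff_sum_toNat_eq_zero]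
  exact ⟨fun h => by simpa [h] using hsum, fun h => by simpa [h] using hsum⟩

/-- If `f` and `g` have different parity and `G` is a connected 3-regular graph,
then the uncolored CFI graphs `Y_f(G)` and `Y_g(G)` are not isomorphic. -/
theorem cfi_noniso_of_diff_parity {V : Type*} [Fintype V] [DecidableEq V]
    (G : SimpleGraph V) [DecidableRel G.Adj]
    (hconn : G.Connected) (hreg : ∀ v, G.degree v = 3)
    (f g : Sym2 V → Bool) (hpar : ¬ (EvenParity G f ↔ EvenParity G g)) :
    IsEmpty (CFIGraph G f ≃g CFIGraph G g) :=
  cfi_noniso_of_diff_parity_general G hreg f g hpar
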